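/- The greedy maximum-coverage selection achieves at least a (1 − 1/e) fraction of the optimal coverage after selecting n sets, for any finite collection of finite sets. -/

import Mathlib

/-!
Let `c k` be the coverage of the first `k` greedy sets and `M` that of any `n` sets. The `n`
sets together add at most `M - c k` new elements to the current union, so one of them adds at
least `(M - c k) / n`, and the greedy choice adds at least as much. Hence the gap `M - c k`
shrinks by a factor `1 - 1/n` per step, leaving `(1 - 1/n)^n * M ≤ M / e` after `n` steps.
-/

open Finset

section Coverage

variable {ι α : Type*} [DecidableEq α] (D : ι → Finset α)

theorem card_biUnion_le_card_add_sum_card_sdiff (B : Finset α) (S : Finset ι) :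
    #(S.biUnion D) ≤ #B + ∑ q ∈ S, #(D q \ B) :=
  calc #(S.biUnion D)
      ≤ #(S.biUnion D \ B) + #B := card_le_card_sdiff_add_card
    _ ≤ #(S.biUnion fun q ↦ D q \ B) + #B := by
        gcongr
        intro x
        simp only [mem_sdiff, mem_biUnion]
        rintro ⟨⟨q, hq, hx⟩, hxB⟩
        exact ⟨q, hq, hx, hxB⟩
    _ ≤ (∑ q ∈ S, #(D q \ B)) + #B := by gcongr; exact card_biUnion_le
    _ = #B + ∑ q ∈ S, #(D q \ B) := add_comm _ _

theorem card_biUnion_insert_eq [DecidableEq ι] (A : Finset ι) (q : ι) :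
    #((insert q A).biUnion D) = #(D q \ A.biUnion D) + #(A.biUnion D) := by
  rw [biUnion_insert, ← card_sdiff_add_card]

theorem card_biUnion_le_add_card_mul_greedy_gain [DecidableEq ι] {A S : Finset ι} {q : ι}
    (hq : ∀ q', #((insert q' A).biUnion D) ≤ #((insert q A).biUnion D)) :
    (#(S.biUnion D) : ℝ) ≤
      #(A.biUnion D) + #S * ((#((insert q A).biUnion D) : ℝ) - #(A.biUnion D)) := by
  have hgain : ∀ q' ∈ S,
      (#(D q' \ A.biUnion D) : ℝ) ≤ #((insert q A).biUnion D) - #(A.biUnion D) := by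
    intro q' _
    have := hq q'
    rw [card_biUnion_insert_eq] at this
    rw [le_sub_iff_add_le]
    exact_mod_cast this
  calc (#(S.biUnion D) : ℝ)
      ≤ #(A.biUnion D) + ∑ q' ∈ S, (#(D q' \ A.biUnion D) : ℝ) := by
        exact_mod_cast card_biUnion_le_card_add_sum_card_sdiff D (A.biUnion D) S
    _ ≤ #(A.biUnion D) + #S * ((#((insert q A).biUnion D) : ℝ) - #(A.biUnion D)) := by
        gcongr
        simpa using sum_le_card_nsmul S _ _ hgain

end Coverage

theorem one_sub_one_sub_inv_pow_mul_le {c : ℕ → ℝ} {m M : ℝ} (hm : 1 ≤ m) (h0 : c 0 = 0)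
    (hc : ∀ k, M ≤ c k + m * (c (k + 1) - c k)) (k : ℕ) :
    (1 - (1 - 1 / m) ^ k) * M ≤ c k := by
  have hr : 0 ≤ 1 - 1 / m := by
    rw [sub_nonneg, div_le_one (by linarith)]
    exact hm
  have hgap : ∀ k, M - c (k + 1) ≤ (1 - 1 / m) * (M - c k) := by
    intro k
    have hstep : (M - c k) / m ≤ c (k + 1) - c k := by
      rw [div_le_iff₀ (by linarith)]
      linarith [hc k]
    calc M - c (k + 1)
        ≤ (M - c k) - (M - c k) / m := by linarith
      _ = (1 - 1 / m) * (M - c k) := by ring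
  suffices M - c k ≤ (1 - 1 / m) ^ k * M by linarith
  induction k with
  | zero => simp [h0]
  | succ k ih =>
    calc M - c (k + 1)
        ≤ (1 - 1 / m) * (M - c k) := hgap k
      _ ≤ (1 - 1 / m) * ((1 - 1 / m) ^ k * M) := mul_le_mul_of_nonneg_left ih hr
      _ = (1 - 1 / m) ^ (k + 1) * M := by ring

theorem one_sub_inv_exp_le_one_sub_one_sub_inv_pow {n : ℕ} (hn : 0 < n) :
    1 - 1 / Real.exp 1 ≤ 1 - (1 - 1 / (n : ℝ)) ^ n := by
  have := Real.one_sub_div_pow_le_exp_neg (n := n) (t := 1) (by exact_mod_cast hn)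
  rw [Real.exp_neg, inv_eq_one_div] at this
  linarith

theorem stmt_17 {ι α : Type*} [DecidableEq ι] [DecidableEq α]
    (D : ι → Finset α) (gsel : ℕ → Finset ι)
    (h0 : gsel 0 = ∅)
    (hstep : ∀ k : ℕ, ∃ q : ι, gsel (k + 1) = insert q (gsel k) ∧
      ∀ q' : ι, ((insert q' (gsel k)).biUnion D).card ≤
        ((insert q (gsel k)).biUnion D).card)
    (n : ℕ) (hn : 0 < n) :
    (∀ S : Finset ι, S.card = n →
      (1 - (1 - 1 / (n : ℝ)) ^ n) * ((S.biUnion D).card : ℝ) ≤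
        (((gsel n).biUnion D).card : ℝ)) ∧
    1 - 1 / Real.exp 1 ≤ 1 - (1 - 1 / (n : ℝ)) ^ n := by
  refine ⟨fun S hS ↦ ?_, one_sub_inv_exp_le_one_sub_one_sub_inv_pow hn⟩
  refine one_sub_one_sub_inv_pow_mul_le (c := fun k ↦ (#((gsel k).biUnion D) : ℝ))
    (by exact_mod_cast hn) (by simp [h0]) (fun k ↦ ?_) n
  obtain ⟨q, hsel, hq⟩ := hstep k
  rw [← hS, hsel]
  exact card_biUnion_le_add_card_mul_greedy_gain D hq
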